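/- Assume W is finite, let u₀ be the longest element of W_J and w₀^J the longest element of W^J (so that w₀ = w₀^J·u₀ is the longest element of W). Then (u₀, u₀, w₀^J) ∈ 𝓘^J and Q_{u₀, u₀, w₀^J} is the greatest element of 𝓠^J: every element of 𝓠^J is ≤ Q_{u₀, u₀, w₀^J}. -/

import Mathlib

namespace TNNFlag

open Classical

variable {B : Type*} {W : Type*} [Group W] {M : CoxeterMatrix B}

/-- Bruhat order on a Coxeter group, via the subword property: `u ≤ w` iff some reduced word
for `w` contains a sublist that is a reduced word for `u`. -/
def bruhatLE (cs : CoxeterSystem M W) (u w : W) : Prop :=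
  ∃ ω : List B, cs.IsReduced ω ∧ cs.wordProd ω = w ∧
    ∃ ω' : List B, ω'.Sublist ω ∧ cs.IsReduced ω' ∧ cs.wordProd ω' = u

/-- Strict Bruhat order. -/
def bruhatLT (cs : CoxeterSystem M W) (u w : W) : Prop :=
  bruhatLE cs u w ∧ u ≠ w

/-- Bruhat covering: `u ⋖ w`, i.e. `u < w` and `ℓ(w) = ℓ(u) + 1`. -/
def bruhatCov (cs : CoxeterSystem M W) (u w : W) : Prop :=
  bruhatLT cs u w ∧ cs.length w = cs.length u + 1

/-- The standard parabolic subgroup `W_J` generated by the simple reflections `s_j`, `j ∈ J`. -/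
def parabolic (cs : CoxeterSystem M W) (J : Set B) : Subgroup W :=
  Subgroup.closure {w | ∃ j ∈ J, w = cs.simple j}

/-- `W^J`: the set of minimal-length representatives of the cosets `W/W_J`. -/
def minReps (cs : CoxeterSystem M W) (J : Set B) : Set W :=
  {w | ∀ v ∈ parabolic cs J, cs.length w ≤ cs.length (w * v)}

/-- `u₀` is the longest element of the (finite) parabolic subgroup `W_J`. -/
def IsLongest (cs : CoxeterSystem M W) (J : Set B) (u₀ : W) : Prop :=
  u₀ ∈ parabolic cs J ∧ ∀ v ∈ parabolic cs J, cs.length v ≤ cs.length u₀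

/-- `W^J_max = {w·u₀ : w ∈ W^J}`: maximal-length coset representatives of `W/W_J`. -/
def maxReps (cs : CoxeterSystem M W) (J : Set B) (u₀ : W) : Set W :=
  {x | ∃ w ∈ minReps cs J, x = w * u₀}

/-- The index set `𝓘^J` of triples `(x, u, w) ∈ W^J_max × W_J × W^J` with `x ≤ wu`. -/
def IndexSet (cs : CoxeterSystem M W) (J : Set B) (u₀ : W) : Set (W × W × W) :=
  {t | t.1 ∈ maxReps cs J u₀ ∧ t.2.1 ∈ parabolic cs J ∧ t.2.2 ∈ minReps cs J ∧
    bruhatLE cs t.1 (t.2.2 * t.2.1)}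

/-- The order relation between cells: `Q_{a,b,c} ≤ Q_{x,u,w}` iff the triples are equal or
there exist `b₁, b₂ ∈ W_J` with `b = b₁b₂`, `ℓ(b) = ℓ(b₁) + ℓ(b₂)` and
`xu⁻¹ ≤ ab₂⁻¹ ≤ cb₁ ≤ w` in Bruhat order. Here `t = (a,b,c)` and `t' = (x,u,w)`. -/
def cellLE (cs : CoxeterSystem M W) (J : Set B) (t t' : W × W × W) : Prop :=
  t = t' ∨
    ∃ b₁ b₂ : W, b₁ ∈ parabolic cs J ∧ b₂ ∈ parabolic cs J ∧ t.2.1 = b₁ * b₂ ∧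
      cs.length t.2.1 = cs.length b₁ + cs.length b₂ ∧
      bruhatLE cs (t'.1 * t'.2.1⁻¹) (t.1 * b₂⁻¹) ∧
      bruhatLE cs (t.1 * b₂⁻¹) (t.2.2 * b₁) ∧
      bruhatLE cs (t.2.2 * b₁) t'.2.2

/-- The order of `𝓠^J`, on `Option (W × W × W)`, where `none` is the least element `0̂` and
`some (x,u,w)` is the cell `Q_{x,u,w}`. -/
def QLE (cs : CoxeterSystem M W) (J : Set B) :
    Option (W × W × W) → Option (W × W × W) → Prop
  | none, _ => True
  | some _, none => False
  | some t, some t' => cellLE cs J t t'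

/-- Membership in `𝓠^J`: `0̂` together with the cells indexed by `𝓘^J`. -/
def Qmem (cs : CoxeterSystem M W) (J : Set B) (u₀ : W) : Option (W × W × W) → Prop
  | none => True
  | some t => t ∈ IndexSet cs J u₀

/-- Strict order of `𝓠^J`. -/
def QLT (cs : CoxeterSystem M W) (J : Set B) (p q : Option (W × W × W)) : Prop :=
  QLE cs J p q ∧ p ≠ q

/-- Covering relation of `𝓠^J`. -/
def QCov (cs : CoxeterSystem M W) (J : Set B) (u₀ : W) (p q : Option (W × W × W)) : Prop :=
  Qmem cs J u₀ p ∧ Qmem cs J u₀ q ∧ QLT cs J p q ∧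
    ∀ z, Qmem cs J u₀ z → QLT cs J p z → QLT cs J z q → False

/-- The rank function of `𝓠^J`: `ρ(0̂) = 0` and `ρ(Q_{x,u,w}) = ℓ(wu) - ℓ(x) + 1`. -/
noncomputable def Qrank (cs : CoxeterSystem M W) : Option (W × W × W) → ℕ
  | none => 0
  | some t => cs.length (t.2.2 * t.2.1) - cs.length t.1 + 1

end TNNFlag

namespace TNNFlag

open Classical List

variable {B : Type*} {W : Type*} [Group W] {M : CoxeterMatrix B}

lemma aux_conj_pow {G : Type*} [Group G] {p b : G} (h : p⁻¹ * b = b * p) :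
    ∀ k : ℕ, (p ^ k)⁻¹ * b * p ^ k = b * p ^ (2 * k)
  | 0 => by simp
  | (k+1) => by
    have hk := aux_conj_pow h k
    have h1 : (p ^ (k+1))⁻¹ * b * p ^ (k+1) = p⁻¹ * ((p ^ k)⁻¹ * b * p ^ k) * p := by
      rw [pow_succ, mul_inv_rev]
      simp [mul_assoc]
    have h2 : p⁻¹ * (b * p ^ (2*k)) * p = (p⁻¹ * b) * (p ^ (2*k) * p) := by
      simp [mul_assoc]
    have hc : p * (p ^ (2*k) * p) = p ^ (2*k) * p * p := by
      rw [← pow_succ, ← pow_succ', ← pow_succ]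
    rw [h1, hk, h2, h, mul_assoc, hc, ← pow_succ, ← pow_succ,
      show 2 * (k+1) = 2*k+1+1 from by ring]


section Machinery

variable (cs : CoxeterSystem M W)

local prefix:100 "σ" => cs.simple
local prefix:100 "π" => cs.wordProd
local prefix:100 "ℓ" => cs.length

lemma two_eq_zero_zmod2 : (1 + 1 : ZMod 2) = 0 := by decide

lemma zmod2_cases (x : ZMod 2) : x = 0 ∨ x = 1 := by revert x; decide

lemma conj_conj_simple (i : B) (t : W) : σ i * (σ i * t * σ i) * σ i = t := by
  simp [← mul_assoc, cs.simple_mul_simple_self, cs.simple_mul_simple_cancel_right]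

lemma conj_simple_eq_iff (i : B) (t : W) : σ i * t * σ i = σ i ↔ t = σ i := by
  constructor
  · intro hh
    have h := conj_conj_simple cs i t
    rw [hh] at h
    rw [← h]
    simp [← mul_assoc, cs.simple_mul_simple_self]
  · rintro rfl; simp [mul_assoc, cs.simple_mul_simple_self]

/-- The basic involution used for the reflection parity representation. -/
noncomputable def sigmaFun (i : B) : W × ZMod 2 → W × ZMod 2 :=
  fun p => (σ i * p.1 * σ i, p.2 + if p.1 = σ i then 1 else 0)

lemma sigmaFun_involutive (i : B) : Function.Involutive (sigmaFun cs i) := by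
  intro ⟨t, e⟩
  simp only [sigmaFun, conj_conj_simple cs, conj_simple_eq_iff cs]
  by_cases ht : t = σ i
  · simp [ht, add_assoc, two_eq_zero_zmod2]
  · simp [ht]

/-- The permutation of `W × ZMod 2` attached to a simple reflection. -/
noncomputable def sigmaPerm (i : B) : Equiv.Perm (W × ZMod 2) :=
  (sigmaFun_involutive cs i).toPerm

lemma sigmaPerm_apply (i : B) (t : W) (e : ZMod 2) :
    sigmaPerm cs i (t, e) = (σ i * t * σ i, e + if t = σ i then 1 else 0) := rfl

/-- The permutation attached to a word. -/
noncomputable def permOfWord (ω : List B) : Equiv.Perm (W × ZMod 2) :=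
  (ω.map (sigmaPerm cs)).prod

@[simp] lemma permOfWord_nil : permOfWord cs [] = 1 := rfl

lemma permOfWord_cons (i : B) (ω : List B) :
    permOfWord cs (i :: ω) = sigmaPerm cs i * permOfWord cs ω := by
  simp [permOfWord]

lemma permOfWord_append (ω ω' : List B) :
    permOfWord cs (ω ++ ω') = permOfWord cs ω * permOfWord cs ω' := by
  simp [permOfWord]

lemma permOfWord_apply (ω : List B) (t : W) (e : ZMod 2) :
    permOfWord cs ω (t, e) =
      (π ω * t * (π ω)⁻¹, e + ((cs.rightInvSeq ω).count t : ZMod 2)) := by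
  induction ω generalizing e with
  | nil => simp
  | cons i ω ih =>
    rw [permOfWord_cons]
    have hris : cs.rightInvSeq (i :: ω) = ((π ω)⁻¹ * σ i * π ω) :: cs.rightInvSeq ω := rfl
    rw [Equiv.Perm.mul_apply, ih, sigmaPerm_apply, hris]
    have hcond : (π ω * t * (π ω)⁻¹ = σ i) ↔ (t = (π ω)⁻¹ * σ i * π ω) := by
      constructor
      · intro h; rw [← h]; group
      · intro h; rw [h]; group
    simp only [Prod.mk.injEq]
    refine ⟨by simp [cs.wordProd_cons, mul_inv_rev, mul_assoc], ?_⟩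
    rw [List.count_cons]
    by_cases h : t = (π ω)⁻¹ * σ i * π ω
    · rw [if_pos (hcond.mpr h), if_pos (beq_iff_eq.mpr h.symm)]
      push_cast; ring
    · rw [if_neg (fun hh => h (hcond.mp hh)), if_neg (by simp only [beq_iff_eq]; exact fun hh => h hh.symm)]
      push_cast; ring



/-- The word `[i,j,i,j,...]` of length `2m`. -/
def cycWord (i j : B) : ℕ → List B
  | 0 => []
  | m + 1 => i :: j :: cycWord i j m

lemma wordProd_cycWord (i j : B) (m : ℕ) : π (cycWord i j m) = (σ i * σ j) ^ m := by
  induction m with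
  | zero => simp [cycWord]
  | succ m ih =>
    rw [cycWord, cs.wordProd_cons, cs.wordProd_cons, ih, pow_succ']
    rw [mul_assoc]

lemma key_id (i j : B) : (σ i * σ j)⁻¹ * σ j = σ j * (σ i * σ j) := by
  rw [mul_inv_rev, cs.inv_simple, cs.inv_simple, mul_assoc]

lemma simple_conj_pow (i j : B) (k : ℕ) :
    ((σ i * σ j) ^ k)⁻¹ * σ j * (σ i * σ j) ^ k = σ j * (σ i * σ j) ^ (2 * k) :=
  aux_conj_pow (key_id cs i j) k

lemma rightInvSeq_cycWord (i j : B) (m : ℕ) :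
    cs.rightInvSeq (cycWord i j m) =
      ((List.range (2 * m)).reverse).map (fun d => σ j * (σ i * σ j) ^ d) := by
  induction m with
  | zero => simp [cycWord]
  | succ m ih =>
    have h1 : cs.rightInvSeq (cycWord i j (m+1)) =
        ((π (j :: cycWord i j m))⁻¹ * σ i * π (j :: cycWord i j m)) ::
        ((π (cycWord i j m))⁻¹ * σ j * π (cycWord i j m)) :: cs.rightInvSeq (cycWord i j m) := rfl
    rw [h1, ih, wordProd_cycWord, cs.wordProd_cons, wordProd_cycWord]
    have e2 : ((σ i * σ j) ^ m)⁻¹ * σ j * (σ i * σ j) ^ m = σ j * (σ i * σ j) ^ (2 * m) :=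
      simple_conj_pow cs i j m
    have e1 : (σ j * (σ i * σ j) ^ m)⁻¹ * σ i * (σ j * (σ i * σ j) ^ m)
        = σ j * (σ i * σ j) ^ (2 * m + 1) := by
      have hba : σ j * σ i = (σ i * σ j)⁻¹ := by
        rw [mul_inv_rev, cs.inv_simple, cs.inv_simple]
      calc (σ j * (σ i * σ j) ^ m)⁻¹ * σ i * (σ j * (σ i * σ j) ^ m)
          = ((σ i * σ j) ^ m)⁻¹ * ((σ j)⁻¹ * σ i * σ j) * (σ i * σ j) ^ m := by
            rw [mul_inv_rev]; simp [mul_assoc]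
        _ = ((σ i * σ j) ^ m)⁻¹ * (σ j * (σ i * σ j)) * (σ i * σ j) ^ m := by
            rw [cs.inv_simple, mul_assoc (σ j)]
        _ = (((σ i * σ j) ^ m)⁻¹ * σ j * (σ i * σ j) ^ m) * ((σ i * σ j) ^ m)⁻¹
              * (σ i * σ j) * (σ i * σ j) ^ m := by
            simp [mul_assoc]
        _ = σ j * (σ i * σ j) ^ (2 * m) * (((σ i * σ j) ^ m)⁻¹
              * (σ i * σ j) * (σ i * σ j) ^ m) := by
            rw [e2]; simp [mul_assoc]
        _ = σ j * (σ i * σ j) ^ (2 * m) * (σ i * σ j) := by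
            have : ((σ i * σ j) ^ m)⁻¹ * (σ i * σ j) * (σ i * σ j) ^ m = (σ i * σ j) := by
              have hc : (σ i * σ j) * (σ i * σ j) ^ m = (σ i * σ j) ^ m * (σ i * σ j) := by
                rw [← pow_succ', ← pow_succ]
              rw [mul_assoc, hc, ← mul_assoc, inv_mul_cancel, one_mul]
            rw [this]
        _ = σ j * (σ i * σ j) ^ (2 * m + 1) := by rw [mul_assoc, ← pow_succ]
    rw [e1, e2]
    have hr : 2 * (m + 1) = (2 * m + 1) + 1 := by ring
    rw [hr, List.range_succ, List.range_succ, List.reverse_append, List.reverse_append]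
    simp

lemma count_rightInvSeq_cycWord_even (i j : B) (t : W) :
    2 ∣ (cs.rightInvSeq (cycWord i j (M i j))).count t := by
  rw [rightInvSeq_cycWord, List.map_reverse, List.count_reverse]
  have hm : (σ i * σ j) ^ (M i j) = 1 := cs.simple_mul_simple_pow i j
  rw [show 2 * M.M i j = M.M i j + M.M i j from by ring, List.range_add, List.map_append,
    List.count_append]
  have heq : (List.map (fun d => σ j * (σ i * σ j) ^ d) (List.map (M.M i j + ·) (List.range (M.M i j))))
      = List.map (fun d => σ j * (σ i * σ j) ^ d) (List.range (M.M i j)) := by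
    rw [List.map_map]
    apply List.map_congr_left
    intro d _
    simp only [Function.comp_apply]
    rw [pow_add, hm, one_mul]
  rw [heq]
  exact ⟨_, (two_mul _).symm⟩


lemma permOfWord_cycWord (i j : B) (m : ℕ) :
    permOfWord cs (cycWord i j m) = (sigmaPerm cs i * sigmaPerm cs j) ^ m := by
  induction m with
  | zero => simp [cycWord]
  | succ m ih =>
    show permOfWord cs (i :: j :: cycWord i j m) = _
    rw [permOfWord_cons, permOfWord_cons, ih, pow_succ']
    rw [mul_assoc]

lemma sigma_liftable : M.IsLiftable (fun i => sigmaPerm cs i) := by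
  intro i j
  have h : (sigmaPerm cs i * sigmaPerm cs j) ^ M.M i j = permOfWord cs (cycWord i j (M.M i j)) :=
    (permOfWord_cycWord cs i j (M.M i j)).symm
  rw [h]
  apply Equiv.ext
  rintro ⟨t, e⟩
  rw [permOfWord_apply, wordProd_cycWord, cs.simple_mul_simple_pow i j]
  have hcount : (((cs.rightInvSeq (cycWord i j (M.M i j))).count t : ℕ) : ZMod 2) = 0 :=
    (ZMod.natCast_eq_zero_iff _ 2).mpr (count_rightInvSeq_cycWord_even cs i j t)
  rw [hcount]
  simp

/-- The reflection parity homomorphism. -/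
noncomputable def Phi : W →* Equiv.Perm (W × ZMod 2) :=
  cs.lift ⟨fun i => sigmaPerm cs i, sigma_liftable cs⟩

lemma Phi_simple (i : B) : Phi cs (σ i) = sigmaPerm cs i :=
  cs.lift_apply_simple (sigma_liftable cs) i

lemma Phi_wordProd (ω : List B) : Phi cs (π ω) = permOfWord cs ω := by
  induction ω with
  | nil => simp [cs.wordProd_nil, permOfWord]
  | cons i ω ih => rw [cs.wordProd_cons, map_mul, ih, Phi_simple, permOfWord_cons]

/-- The parity of the number of occurrences of `t` in the right inversion sequence of any
word for `w`. -/
noncomputable def eta (w t : W) : ZMod 2 := (Phi cs w (t, 0)).2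

lemma eta_eq_count (ω : List B) (t : W) :
    eta cs (π ω) t = ((cs.rightInvSeq ω).count t : ZMod 2) := by
  unfold eta
  rw [Phi_wordProd, permOfWord_apply]
  simp

lemma Phi_apply (w t : W) (e : ZMod 2) :
    Phi cs w (t, e) = (w * t * w⁻¹, e + eta cs w t) := by
  obtain ⟨ω, rfl⟩ := cs.wordProd_surjective w
  rw [Phi_wordProd, permOfWord_apply, eta_eq_count]

lemma eta_mul (x y t : W) : eta cs (x * y) t = eta cs y t + eta cs x (y * t * y⁻¹) := by
  have h1 : Phi cs (x * y) (t, 0) = Phi cs x (Phi cs y (t, 0)) := by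
    rw [map_mul]; rfl
  have h2 := Phi_apply cs y t 0
  have h3 := Phi_apply cs x (y * t * y⁻¹) (0 + eta cs y t)
  show (Phi cs (x * y) (t, 0)).2 = _
  rw [h1, h2, h3]
  simp

lemma eta_mem_ris {w t : W} (h : eta cs w t = 1) {ω : List B} (hπ : π ω = w) :
    t ∈ cs.rightInvSeq ω := by
  by_contra hmem
  rw [← hπ, eta_eq_count, List.count_eq_zero_of_not_mem hmem] at h
  simp at h

lemma inversion_of_eta {w t : W} (h : eta cs w t = 1) :
    cs.IsReflection t ∧ ℓ (w * t) < ℓ w := by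
  obtain ⟨ω, hred, hw⟩ := cs.exists_reduced_word' w
  have hmem : t ∈ cs.rightInvSeq ω := eta_mem_ris cs h hw.symm
  have := cs.isRightInversion_of_mem_rightInvSeq hred hmem
  rw [← hw] at this
  exact ⟨this.1, this.2⟩

lemma eta_simple (j : B) (x : W) : eta cs (σ j) x = if x = σ j then 1 else 0 := by
  have h : σ j = π [j] := by simp [cs.wordProd_cons, cs.wordProd_nil]
  rw [h, eta_eq_count]
  have hris : cs.rightInvSeq [j] = [(π ([] : List B))⁻¹ * σ j * π ([] : List B)] := rfl
  rw [hris]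
  simp only [cs.wordProd_nil, inv_one, one_mul, mul_one]
  by_cases hx : x = σ j
  · rw [hx]; simp
  · rw [List.count_eq_zero_of_not_mem (by simpa using hx)]
    simp [hx]

lemma eta_reflection_self {t : W} (ht : cs.IsReflection t) : eta cs t t = 1 := by
  obtain ⟨u, i, rfl⟩ := ht
  obtain ⟨ω, rfl⟩ := cs.wordProd_surjective u
  induction ω with
  | nil =>
    simp only [cs.wordProd_nil, one_mul, inv_one, mul_one]
    rw [eta_simple]; simp
  | cons j ω ih =>
    set t' := π ω * σ i * (π ω)⁻¹ with ht'
    have ht'inv : t'⁻¹ = t' := by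
      rw [ht']; simp [mul_assoc, mul_inv_rev]
    have hτ : π (j :: ω) * σ i * (π (j :: ω))⁻¹ = σ j * t' * σ j := by
      rw [cs.wordProd_cons, mul_inv_rev, cs.inv_simple, ht']
      simp [mul_assoc]
    rw [hτ]
    set τ := σ j * t' * σ j with hτdef
    have e1 : τ = σ j * (t' * σ j) := by rw [hτdef, mul_assoc]
    have key1 : eta cs τ τ = eta cs (t' * σ j) τ + eta cs (σ j) (((t' * σ j)) * τ * ((t' * σ j))⁻¹) := by
      have h := eta_mul cs (σ j) (t' * σ j) τ
      rwa [← e1] at h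
    have hconj : (t' * σ j) * τ * (t' * σ j)⁻¹ = t' := by
      rw [hτdef, mul_inv_rev, cs.inv_simple, ht'inv]
      calc t' * σ j * (σ j * t' * σ j) * (σ j * t')
          = t' * (σ j * σ j) * t' * (σ j * σ j) * t' := by simp [mul_assoc]
        _ = t' * t' * t' := by rw [cs.simple_mul_simple_self]; simp
        _ = t' := by
            have : t' * t' = 1 := by
              rw [ht']
              calc π ω * σ i * (π ω)⁻¹ * (π ω * σ i * (π ω)⁻¹)
                  = π ω * (σ i * σ i) * (π ω)⁻¹ := by simp [mul_assoc]
                _ = 1 := by rw [cs.simple_mul_simple_self]; simp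
            rw [this, one_mul]
    have key2 : eta cs (t' * σ j) τ = eta cs (σ j) τ + eta cs t' (σ j * τ * σ j) := by
      have := eta_mul cs t' (σ j) τ
      rw [this]
      congr 1
      rw [cs.inv_simple]
    have hback : σ j * τ * σ j = t' := conj_conj_simple cs j t'
    rw [key1, hconj, key2, hback, ih]
    rw [eta_simple, eta_simple]
    have hiff : τ = σ j ↔ t' = σ j := by
      rw [hτdef]; exact conj_simple_eq_iff cs j t'
    by_cases hc : t' = σ j
    · rw [if_pos (hiff.mpr hc), if_pos hc]
      decide
    · rw [if_neg (fun hh => hc (hiff.mp hh)), if_neg hc]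
      decide

lemma eta_eq_one_of_inversion {w t : W} (ht : cs.IsReflection t) (hlt : ℓ (w * t) < ℓ w) :
    eta cs w t = 1 := by
  rcases zmod2_cases (eta cs w t) with h0 | h1
  · exfalso
    have hw : w = (w * t) * t := by
      rw [mul_assoc, ht.mul_self, mul_one]
    have hco : eta cs w t = eta cs t t + eta cs (w * t) (t * t * t⁻¹) := by
      nth_rewrite 1 [hw]
      exact eta_mul cs (w * t) t t
    have htt : t * t * t⁻¹ = t := by rw [ht.mul_self, one_mul, ht.inv]
    rw [htt, eta_reflection_self cs ht, h0] at hco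
    have h1' : eta cs (w * t) t = 1 := by
      rcases zmod2_cases (eta cs (w * t) t) with h | h
      · rw [h] at hco; exact absurd hco (by decide)
      · exact h
    have := (inversion_of_eta cs h1').2
    rw [mul_assoc, ht.mul_self, mul_one] at this
    omega
  · exact h1

/-- Strong exchange property. -/
lemma strongExchange {w t : W} (ht : cs.IsReflection t) (hlt : ℓ (w * t) < ℓ w)
    {ω : List B} (hπ : π ω = w) :
    ∃ k, k < ω.length ∧ π (ω.eraseIdx k) = w * t := by
  have h1 : eta cs w t = 1 := eta_eq_one_of_inversion cs ht hlt
  have hmem : t ∈ cs.rightInvSeq ω := eta_mem_ris cs h1 hπ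
  obtain ⟨k, hk, hget⟩ := List.mem_iff_getElem.mp hmem
  rw [cs.length_rightInvSeq] at hk
  refine ⟨k, hk, ?_⟩
  have hgetD : (cs.rightInvSeq ω).getD k 1 = t := by
    rw [List.getD_eq_getElem?_getD, List.getElem?_eq_getElem (by rwa [cs.length_rightInvSeq]), Option.getD_some]
    exact hget
  rw [← cs.wordProd_mul_getD_rightInvSeq ω k, hgetD, hπ]

lemma sublist_single {α : Type*} {l : List α} {a : α} (h : l <+ [a]) : l = [] ∨ l = [a] := by
  cases h with
  | cons _ h' => exact Or.inl (List.sublist_nil.mp h')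
  | cons_cons _ h' => rw [List.sublist_nil.mp h']; exact Or.inr rfl

lemma isReduced_nil : cs.IsReduced ([] : List B) := by
  unfold CoxeterSystem.IsReduced
  simp

/-- Every word has a reduced sublist with the same product. -/
lemma exists_reduced_sublist : ∀ (n : ℕ) (ω : List B), ω.length ≤ n →
    ∃ τ, τ <+ ω ∧ cs.IsReduced τ ∧ π τ = π ω := by
  intro n
  induction n with
  | zero =>
    intro ω hlen
    have : ω = [] := List.eq_nil_of_length_eq_zero (Nat.le_zero.mp hlen)
    subst this
    exact ⟨[], List.Sublist.refl _, isReduced_nil cs, rfl⟩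
  | succ n ih =>
    intro ω hlen
    by_cases hred : cs.IsReduced ω
    · exact ⟨ω, List.Sublist.refl _, hred, rfl⟩
    · -- find minimal non-reduced prefix
      have hP : ∃ k, ¬ cs.IsReduced (ω.take (k+1)) := by
        refine ⟨ω.length - 1, ?_⟩
        have hω : ω ≠ [] := by
          intro h; rw [h] at hred; exact hred (isReduced_nil cs)
        have hpos : 0 < ω.length := List.length_pos_iff.mpr hω
        rwa [List.take_of_length_le (by omega)]
      classical
      set k := Nat.find hP with hk
      have hknot : ¬ cs.IsReduced (ω.take (k+1)) := Nat.find_spec hP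
      have hkred : cs.IsReduced (ω.take k) := by
        rcases Nat.eq_zero_or_pos k with h0 | hpos
        · rw [h0, List.take_zero]; exact isReduced_nil cs
        · have := Nat.find_min hP (m := k - 1) (by omega)
          push_neg at this
          have hk1 : k - 1 + 1 = k := by omega
          rwa [hk1] at this
      have hklt : k < ω.length := by
        by_contra hge
        push_neg at hge
        rw [List.take_of_length_le hge] at hkred
        exact hred hkred
      have htake : ω.take (k+1) = ω.take k ++ [ω[k]] := by
        rw [List.take_succ, List.getElem?_eq_getElem hklt]
        rfl
      have hlen_take : (ω.take k).length = k := by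
        rw [List.length_take]; omega
      have hltake : cs.length (π (ω.take k)) = k := by
        have := hkred; unfold CoxeterSystem.IsReduced at this; rw [this, hlen_take]
      have hdesc : cs.length (π (ω.take k) * σ ω[k]) < cs.length (π (ω.take k)) := by
        have hnotred : cs.length (π (ω.take (k+1))) ≠ (ω.take (k+1)).length := hknot
        rw [htake, cs.wordProd_append] at hnotred
        have hsingle : π [ω[k]] = σ ω[k] := by simp [cs.wordProd_cons, cs.wordProd_nil]
        rw [hsingle] at hnotred
        have hlen2 : (ω.take k ++ [ω[k]]).length = k + 1 := by rw [List.length_append, hlen_take]; simp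
        rw [hlen2] at hnotred
        rcases cs.length_mul_simple (π (ω.take k)) ω[k] with h | h
        · rw [hltake] at h; omega
        · rw [hltake] at h ⊢; omega
      obtain ⟨m, hm, hprod⟩ := strongExchange cs (cs.isReflection_simple ω[k]) hdesc
        (rfl : π (ω.take k) = π (ω.take k))
      set ω' := ((ω.take k).eraseIdx m) ++ ω.drop (k+1) with hω'
      have hω'π : π ω' = π ω := by
        rw [hω', cs.wordProd_append, hprod]
        conv_rhs => rw [← List.take_append_drop (k+1) ω]
        rw [cs.wordProd_append, htake, cs.wordProd_append]
        have hsingle : π [ω[k]] = σ ω[k] := by simp [cs.wordProd_cons, cs.wordProd_nil]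
        rw [hsingle]
      have hω'sub : ω' <+ ω := by
        have h1 : ω' <+ ω.take k ++ ω.drop (k+1) :=
          List.Sublist.append (List.eraseIdx_sublist _ m) (List.Sublist.refl _)
        have h2 : ω.take k ++ ω.drop (k+1) = ω.eraseIdx k := (List.eraseIdx_eq_take_drop_succ ω k).symm
        rw [h2] at h1
        exact h1.trans (List.eraseIdx_sublist ω k)
      have hω'len : ω'.length ≤ n := by
        have hsub1 : ω' <+ ω.eraseIdx k := by
          have h1 : ω' <+ ω.take k ++ ω.drop (k+1) :=
            List.Sublist.append (List.eraseIdx_sublist _ m) (List.Sublist.refl _)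
          rwa [← List.eraseIdx_eq_take_drop_succ ω k] at h1
        have h2 := hsub1.length_le
        have h3 : (ω.eraseIdx k).length = ω.length - 1 := List.length_eraseIdx_of_lt hklt
        omega
      obtain ⟨τ, hτsub, hτred, hτπ⟩ := ih ω' hω'len
      exact ⟨τ, hτsub.trans hω'sub, hτred, by rw [hτπ, hω'π]⟩


end Machinery

/-- The Bruhat order defined via chains of length-decreasing reflection multiplications. -/
inductive LEc (cs : CoxeterSystem M W) (u : W) : W → Prop
  | refl : LEc cs u u
  | step {w t : W} : cs.IsReflection t → cs.length (w * t) < cs.length w →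
      LEc cs u (w * t) → LEc cs u w

section Machinery2
variable (cs : CoxeterSystem M W)
local prefix:100 "σ" => cs.simple
local prefix:100 "π" => cs.wordProd
local prefix:100 "ℓ" => cs.length

lemma LEc_trans {u v w : W} (h1 : LEc cs u v) (h2 : LEc cs v w) : LEc cs u w := by
  induction h2 with
  | refl => exact h1
  | step ht hl _ ih => exact LEc.step ht hl ih

lemma LEc_length_le {u w : W} (h : LEc cs u w) : ℓ u ≤ ℓ w := by
  induction h with
  | refl => exact le_refl _
  | step _ hl _ ih => omega

/-- Subword property for chain order: `u` appears as a reduced sublist of *every* reduced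
word for `w`. -/
lemma LEc_exists_sublist {u w : W} (h : LEc cs u w) :
    ∀ ω : List B, cs.IsReduced ω → π ω = w →
      ∃ τ, τ <+ ω ∧ cs.IsReduced τ ∧ π τ = u := by
  induction h with
  | refl => exact fun ω hred hπ => ⟨ω, List.Sublist.refl _, hred, hπ⟩
  | step ht hl _ ih =>
    intro ω hred hπ
    rename_i w' t hc
    obtain ⟨k, hk, he⟩ := strongExchange cs ht hl hπ
    obtain ⟨ζ, hζsub, hζred, hζπ⟩ := exists_reduced_sublist cs (ω.eraseIdx k).length
      (ω.eraseIdx k) (le_refl _)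
    obtain ⟨τ, hτsub, hτred, hτπ⟩ := ih ζ hζred (by rw [hζπ, he])
    exact ⟨τ, hτsub.trans (hζsub.trans (List.eraseIdx_sublist ω k)), hτred, hτπ⟩

/-- One-step descent lemma. -/
lemma descStep (n : ℕ)
    (HM : ∀ ω : List B, cs.IsReduced ω → ω.length < n → ∀ τ, τ <+ ω → cs.IsReduced τ →
      LEc cs (π τ) (π ω))
    {u z : W} {i : B} (hzn : ℓ z ≤ n) (h : LEc cs u z)
    (h1 : ℓ (z * σ i) < ℓ z) (h2 : ℓ u < ℓ (u * σ i)) : LEc cs u (z * σ i) := by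
  obtain ⟨ζ, hζred, hζπ⟩ := cs.exists_reduced_word' (z * σ i)
  have hζlen : ζ.length = ℓ (z * σ i) := by
    have := hζred; unfold CoxeterSystem.IsReduced at this; rw [← hζπ] at this; omega
  have hsingle : π [i] = σ i := by simp [cs.wordProd_cons, cs.wordProd_nil]
  have haπ : π (ζ ++ [i]) = z := by
    rw [cs.wordProd_append, hsingle, ← hζπ, mul_assoc, cs.simple_mul_simple_self, mul_one]
  have hared : cs.IsReduced (ζ ++ [i]) := by
    unfold CoxeterSystem.IsReduced
    rw [haπ, List.length_append, hζlen]
    rcases cs.length_mul_simple z i with hcase | hcase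
    · omega
    · simp only [List.length_cons, List.length_nil]
      omega
  obtain ⟨τ, hτsub, hτred, hτπ⟩ := LEc_exists_sublist cs h (ζ ++ [i]) hared haπ
  rcases List.sublist_append_iff.mp hτsub with ⟨τ₁, τ₂, rfl, hτ₁, hτ₂⟩
  rcases sublist_single hτ₂ with h2' | h2'
  · subst h2'
    rw [List.append_nil] at hτπ hτred
    have := HM ζ hζred (by omega) τ₁ hτ₁ hτred
    rw [hτπ, ← hζπ] at this
    exact this
  · exfalso
    subst h2'
    have hπτ : π τ₁ * σ i = u := by
      rw [← hτπ, cs.wordProd_append, hsingle]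
    have hlenτ : ℓ u = τ₁.length + 1 := by
      have := hτred; unfold CoxeterSystem.IsReduced at this
      rw [hτπ] at this; rw [this, List.length_append]; simp
    have hle : ℓ (π τ₁) ≤ τ₁.length := cs.length_wordProd_le τ₁
    have hu : u * σ i = π τ₁ := by
      rw [← hπτ, mul_assoc, cs.simple_mul_simple_self, mul_one]
    rw [hu] at h2
    omega

/-- One-step lifting lemma. -/
lemma liftStep (n : ℕ)
    (HM : ∀ ω : List B, cs.IsReduced ω → ω.length < n → ∀ τ, τ <+ ω → cs.IsReduced τ →
      LEc cs (π τ) (π ω)) :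
    ∀ k : ℕ, ∀ {u v : W} {i : B}, ℓ v ≤ k → ℓ v ≤ n → LEc cs u v →
      ℓ u < ℓ (u * σ i) → ℓ v < ℓ (v * σ i) → LEc cs (u * σ i) (v * σ i) := by
  intro k
  induction k with
  | zero =>
    intro u v i hk hn h hu hv
    cases h with
    | refl => exact LEc.refl
    | step ht hl hc => omega
  | succ k ih =>
    intro u v i hk hn h hu hv
    cases h with
    | refl => exact LEc.refl
    | step ht hl hc =>
      rename_i t
      by_cases hd : ℓ (v * t * σ i) < ℓ (v * t)
      · -- descent case
        have hdesc : LEc cs u (v * t * σ i) := by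
          apply descStep cs n HM (by omega) hc hd hu
        have hre : (v * t * σ i) * σ i = v * t := by
          rw [mul_assoc, cs.simple_mul_simple_self, mul_one]
        have hl2 : ℓ (v * t * σ i) < ℓ ((v * t * σ i) * σ i) := by rw [hre]; omega
        have hlift2 : LEc cs (u * σ i) ((v * t * σ i) * σ i) :=
          ih (by omega) (by omega) hdesc hu hl2
        rw [hre] at hlift2
        have hstep1 : LEc cs (u * σ i) v := LEc.step ht hl hlift2
        have hre2 : (v * σ i) * σ i = v := by
          rw [mul_assoc, cs.simple_mul_simple_self, mul_one]
        have hc' : LEc cs (u * σ i) ((v * σ i) * σ i) := by rw [hre2]; exact hstep1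
        have hl' : ℓ ((v * σ i) * σ i) < ℓ (v * σ i) := by rw [hre2]; omega
        exact LEc.step (cs.isReflection_simple i) hl' hc'
      · -- ascent case
        have hgt : ℓ (v * t) < ℓ (v * t * σ i) := by
          have hne := cs.length_mul_simple_ne (v * t) i
          omega
        have hlift : LEc cs (u * σ i) (v * t * σ i) :=
          ih (by omega) (by omega) hc hu hgt
        have ht' : cs.IsReflection (σ i * t * σ i) := by
          have := ht.conj (σ i)
          rwa [cs.inv_simple] at this
        have hre : (v * σ i) * (σ i * t * σ i) = v * t * σ i := by
          rw [← mul_assoc, ← mul_assoc, mul_assoc v, cs.simple_mul_simple_self, mul_one]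
        have hlen : ℓ ((v * σ i) * (σ i * t * σ i)) < ℓ (v * σ i) := by
          rw [hre]
          have hub : ℓ (v * t * σ i) ≤ ℓ (v * t) + 1 := by
            have := cs.length_mul_le (v * t) (σ i)
            rwa [cs.length_simple] at this
          omega
        have hc' : LEc cs (u * σ i) ((v * σ i) * (σ i * t * σ i)) := by
          rw [hre]; exact hlift
        exact LEc.step ht' hlen hc'

/-- The subword property: a reduced sublist of a reduced word is below it in the chain order. -/
lemma master : ∀ n : ℕ, ∀ ω : List B, ω.length ≤ n → cs.IsReduced ω →
    ∀ τ, τ <+ ω → cs.IsReduced τ → LEc cs (π τ) (π ω) := by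
  intro n
  induction n with
  | zero =>
    intro ω hlen _ τ hsub _
    have hω : ω = [] := List.eq_nil_of_length_eq_zero (Nat.le_zero.mp hlen)
    subst hω
    rw [List.sublist_nil.mp hsub]
    exact LEc.refl
  | succ n ih =>
    intro ω hlen hred τ hsub hτred
    by_cases heq : τ.length = ω.length
    · rw [hsub.eq_of_length heq]; exact LEc.refl
    · have hωne : ω ≠ [] := by
        intro h; subst h
        rw [List.sublist_nil.mp hsub] at heq
        exact heq rfl
      rcases List.eq_nil_or_concat ω with h | ⟨ω₀, i, rfl⟩
      · exact absurd h hωne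
      rw [List.concat_eq_append] at *
      have hω₀red : cs.IsReduced ω₀ := by
        have := hred.take ω₀.length
        rwa [List.take_left] at this
      have hω₀len : ω₀.length ≤ n := by
        rw [List.length_append] at hlen; simp at hlen; omega
      have hsingle : π [i] = σ i := by simp [cs.wordProd_cons, cs.wordProd_nil]
      have hπω : π (ω₀ ++ [i]) = π ω₀ * σ i := by rw [cs.wordProd_append, hsingle]
      have hℓω : ℓ (π (ω₀ ++ [i])) = ω₀.length + 1 := by
        have := hred; unfold CoxeterSystem.IsReduced at this
        rw [this, List.length_append]; simp
      have hℓω₀ : ℓ (π ω₀) = ω₀.length := by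
        have := hω₀red; unfold CoxeterSystem.IsReduced at this; rw [this]
      rcases List.sublist_append_iff.mp hsub with ⟨τ₁, τ₂, rfl, h1, h2⟩
      rcases sublist_single h2 with h2' | h2'
      · subst h2'
        rw [List.append_nil] at hτred ⊢
        have hstep : LEc cs (π τ₁) (π ω₀) := ih ω₀ hω₀len hω₀red τ₁ h1 hτred
        have hre : π (ω₀ ++ [i]) * σ i = π ω₀ := by
          rw [hπω, mul_assoc, cs.simple_mul_simple_self, mul_one]
        have hl : ℓ (π (ω₀ ++ [i]) * σ i) < ℓ (π (ω₀ ++ [i])) := by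
          rw [hre, hℓω, hℓω₀]; omega
        exact LEc.step (cs.isReflection_simple i) hl (by rw [hre]; exact hstep)
      · subst h2'
        have hτ₁red : cs.IsReduced τ₁ := by
          have := hτred.take τ₁.length
          rwa [List.take_left] at this
        have hℓτ : ℓ (π (τ₁ ++ [i])) = τ₁.length + 1 := by
          have := hτred; unfold CoxeterSystem.IsReduced at this
          rw [this, List.length_append]; simp
        have hℓτ₁ : ℓ (π τ₁) = τ₁.length := by
          have := hτ₁red; unfold CoxeterSystem.IsReduced at this; rw [this]
        have hπτ : π (τ₁ ++ [i]) = π τ₁ * σ i := by rw [cs.wordProd_append, hsingle]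
        have hchain : LEc cs (π τ₁) (π ω₀) := ih ω₀ hω₀len hω₀red τ₁ h1 hτ₁red
        have hlift := liftStep cs n (fun ω' hred' hlt' τ' hsub' hτred' =>
          ih ω' (by omega) hred' τ' hsub' hτred') n (by omega) (by omega)
          hchain (i := i) (by rw [← hπτ]; omega) (by rw [← hπω]; omega)
        rw [hπτ, hπω]
        exact hlift

/-- Full subword property, final form. -/
lemma LEc_of_sublist {ω τ : List B} (hred : cs.IsReduced ω) (hsub : τ <+ ω)
    (hτred : cs.IsReduced τ) : LEc cs (π τ) (π ω) :=
  master cs ω.length ω (le_refl _) hred τ hsub hτred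

lemma masterHM (n : ℕ) : ∀ ω : List B, cs.IsReduced ω → ω.length < n → ∀ τ, τ <+ ω →
    cs.IsReduced τ → LEc cs (π τ) (π ω) :=
  fun ω hred _ τ hsub hτred => LEc_of_sublist cs hred hsub hτred

/-- Descent lemma, final form. -/
lemma LEc_descend {u z : W} {i : B} (h : LEc cs u z)
    (h1 : ℓ (z * σ i) < ℓ z) (h2 : ℓ u < ℓ (u * σ i)) : LEc cs u (z * σ i) :=
  descStep cs (ℓ z) (masterHM cs (ℓ z)) (le_refl _) h h1 h2

/-- Lifting lemma, final form. -/
lemma LEc_lift {u v : W} {i : B} (h : LEc cs u v)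
    (hu : ℓ u < ℓ (u * σ i)) (hv : ℓ v < ℓ (v * σ i)) : LEc cs (u * σ i) (v * σ i) :=
  liftStep cs (ℓ v) (masterHM cs (ℓ v)) (ℓ v) (le_refl _) (le_refl _) h hu hv

/-- Down-lifting: multiplying both sides by a common right descent. -/
lemma LEc_dlift {u w : W} {i : B} (h : LEc cs u w)
    (hw : ℓ (w * σ i) < ℓ w) (hu : ℓ (u * σ i) < ℓ u) : LEc cs (u * σ i) (w * σ i) := by
  have hre : (u * σ i) * σ i = u := by
    rw [mul_assoc, cs.simple_mul_simple_self, mul_one]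
  have h1 : LEc cs (u * σ i) u := LEc.step (cs.isReflection_simple i) hu LEc.refl
  have h2 : LEc cs (u * σ i) w := LEc_trans cs h1 h
  have := LEc_descend cs h2 hw (by rw [hre]; omega)
  exact this

end Machinery2




section Counting
variable (cs : CoxeterSystem M W) (J : Set B)
local prefix:100 "σ" => cs.simple
local prefix:100 "π" => cs.wordProd
local prefix:100 "ℓ" => cs.length

lemma wordProd_mem_parabolic {ω : List B} (hω : ∀ i ∈ ω, i ∈ J) :
    π ω ∈ parabolic cs J := by
  induction ω with
  | nil => rw [cs.wordProd_nil]; exact one_mem _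
  | cons i ω ih =>
    rw [cs.wordProd_cons]
    exact mul_mem (Subgroup.subset_closure ⟨i, hω i (List.mem_cons_self (a := i) (l := ω)), rfl⟩)
      (ih fun j hj => hω j (List.mem_cons_of_mem _ hj))

lemma exists_parabolic_word {x : W} (hx : x ∈ parabolic cs J) :
    ∃ ω : List B, cs.IsReduced ω ∧ π ω = x ∧ ∀ i ∈ ω, i ∈ J := by
  have h1 : ∃ ω : List B, π ω = x ∧ ∀ i ∈ ω, i ∈ J := by
    induction hx using Subgroup.closure_induction with
    | mem y hy =>
      obtain ⟨j, hj, rfl⟩ := hy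
      exact ⟨[j], by simp [cs.wordProd_cons, cs.wordProd_nil], by simpa using hj⟩
    | one => exact ⟨[], cs.wordProd_nil, by simp⟩
    | mul a b _ _ iha ihb =>
      obtain ⟨α, hα, hαJ⟩ := iha
      obtain ⟨β, hβ, hβJ⟩ := ihb
      exact ⟨α ++ β, by rw [cs.wordProd_append, hα, hβ],
        fun i hi => (List.mem_append.mp hi).elim (hαJ i) (hβJ i)⟩
    | inv a _ iha =>
      obtain ⟨α, hα, hαJ⟩ := iha
      exact ⟨α.reverse, by rw [cs.wordProd_reverse, hα],
        fun i hi => hαJ i (List.mem_reverse.mp hi)⟩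
  obtain ⟨ω, hπ, hJ⟩ := h1
  obtain ⟨τ, hsub, hred, hτπ⟩ := exists_reduced_sublist cs ω.length ω (le_refl _)
  exact ⟨τ, hred, by rw [hτπ, hπ], fun i hi => hJ i (hsub.subset hi)⟩

lemma ris_mem_parabolic {ω : List B} (hω : ∀ i ∈ ω, i ∈ J) {t : W}
    (ht : t ∈ cs.rightInvSeq ω) : t ∈ parabolic cs J := by
  induction ω with
  | nil => simp only [CoxeterSystem.rightInvSeq_nil] at ht; exact absurd ht (List.not_mem_nil (a := t))
  | cons i ω ih =>
    have hris : cs.rightInvSeq (i :: ω) = ((π ω)⁻¹ * σ i * π ω) :: cs.rightInvSeq ω := rfl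
    rw [hris, List.mem_cons] at ht
    have hJt : ∀ j ∈ ω, j ∈ J := fun j hj => hω j (List.mem_cons_of_mem _ hj)
    rcases ht with rfl | hmem
    · have hm : π ω ∈ parabolic cs J := wordProd_mem_parabolic cs J hJt
      exact mul_mem (mul_mem (inv_mem hm)
        (Subgroup.subset_closure ⟨i, hω i (List.mem_cons_self (a := i) (l := ω)), rfl⟩)) hm
    · exact ih hJt hmem

/-- If `eta cs x t = 1` for `x` in the parabolic, then `t` is a reflection lying in
the parabolic subgroup. -/
lemma eta_refl_parab {x : W} (hx : x ∈ parabolic cs J) {t : W} (h : eta cs x t = 1) :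
    cs.IsReflection t ∧ t ∈ parabolic cs J := by
  obtain ⟨ω, hred, hπ, hJ⟩ := exists_parabolic_word cs J hx
  have hmem : t ∈ cs.rightInvSeq ω := eta_mem_ris cs h hπ
  exact ⟨cs.isReflection_of_mem_rightInvSeq ω hmem, ris_mem_parabolic cs J hJ hmem⟩

variable [Finite W]

noncomputable local instance fintypeOfW : Fintype W := Fintype.ofFinite W

lemma card_eta_filter (w : W) :
    (Finset.univ.filter (fun t : W => eta cs w t = 1)).card = ℓ w := by
  obtain ⟨ω, hred, hπ⟩ := cs.exists_reduced_word' w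
  have hset : (Finset.univ.filter (fun t : W => eta cs w t = 1)) = (cs.rightInvSeq ω).toFinset := by
    ext t
    simp only [Finset.mem_filter, Finset.mem_univ, true_and, List.mem_toFinset]
    constructor
    · intro h; exact eta_mem_ris cs h hπ.symm
    · intro h
      have hinv := cs.isRightInversion_of_mem_rightInvSeq hred h
      rw [← hπ] at *
      exact eta_eq_one_of_inversion cs hinv.1 hinv.2
  rw [hset, List.toFinset_card_of_nodup hred.nodup_rightInvSeq, cs.length_rightInvSeq]
  have := hred
  unfold CoxeterSystem.IsReduced at this
  rw [← hπ] at this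
  omega

lemma partition_count {m x v : W} (hm : m = x * v)
    (hv : ∀ t, eta cs v t = 1 → eta cs m t = 1)
    (hx : ∀ t, eta cs x t = 1 → eta cs m (v⁻¹ * t * v) = 1) :
    ℓ m = ℓ x + ℓ v := by
  classical
  set A : Finset W := Finset.univ.filter (fun t : W => eta cs v t = 1) with hA
  set Bf : Finset W := (Finset.univ.filter (fun t : W => eta cs x t = 1)).image
    (fun t => v⁻¹ * t * v) with hB
  have hco : ∀ t : W, eta cs m t = eta cs v t + eta cs x (v * t * v⁻¹) := by
    intro t; rw [hm]; exact eta_mul cs x v t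
  have hAmem : ∀ t, t ∈ A ↔ eta cs v t = 1 := by
    intro t; simp [hA]
  have hBmem : ∀ t, t ∈ Bf ↔ eta cs x (v * t * v⁻¹) = 1 := by
    intro t
    simp only [hB, Finset.mem_image, Finset.mem_filter, Finset.mem_univ, true_and]
    constructor
    · rintro ⟨t', ht', rfl⟩
      have : v * (v⁻¹ * t' * v) * v⁻¹ = t' := by group
      rwa [this]
    · intro h
      refine ⟨v * t * v⁻¹, h, ?_⟩
      group
  have hdisj : Disjoint A Bf := by
    rw [Finset.disjoint_left]
    intro t htA htB
    have h1 := (hAmem t).mp htA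
    have h2 := (hBmem t).mp htB
    have h3 := hv t h1
    rw [hco t, h1, h2] at h3
    exact absurd h3 (by decide)
  have hunion : A ∪ Bf = Finset.univ.filter (fun t : W => eta cs m t = 1) := by
    ext t
    simp only [Finset.mem_union, Finset.mem_filter, Finset.mem_univ, true_and]
    constructor
    · rintro (h | h)
      · exact hv t ((hAmem t).mp h)
      · have h2 := (hBmem t).mp h
        have := hx _ h2
        have hre : v⁻¹ * (v * t * v⁻¹) * v = t := by group
        rwa [hre] at this
    · intro h
      rw [hco t] at h
      rcases zmod2_cases (eta cs v t) with h0 | h1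
      · right
        rw [hBmem]
        rw [h0, zero_add] at h
        exact h
      · left; exact (hAmem t).mpr h1
  have hcardA : A.card = ℓ v := by rw [hA]; exact card_eta_filter cs v
  have hcardB : Bf.card = ℓ x := by
    rw [hB, Finset.card_image_of_injective _ (fun a b hab => by
      have : v * (v⁻¹ * a * v) * v⁻¹ = v * (v⁻¹ * b * v) * v⁻¹ := by rw [hab]
      have ha : v * (v⁻¹ * a * v) * v⁻¹ = a := by group
      have hb : v * (v⁻¹ * b * v) * v⁻¹ = b := by group
      rwa [ha, hb] at this)]
    exact card_eta_filter cs x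
  have hcardM : (Finset.univ.filter (fun t : W => eta cs m t = 1)).card = ℓ m :=
    card_eta_filter cs m
  rw [← hcardM, ← hunion, Finset.card_union_of_disjoint hdisj, hcardA, hcardB]
  omega

/-- Length is additive below a maximal-length element. -/
lemma length_add_of_max {m0 : W} (hm0 : ∀ w : W, ℓ w ≤ ℓ m0) (x : W) :
    ℓ x + ℓ (x⁻¹ * m0) = ℓ m0 := by
  have hm : m0 = x * (x⁻¹ * m0) := by group
  have href : ∀ t : W, cs.IsReflection t → eta cs m0 t = 1 := fun t ht =>
    eta_eq_one_of_inversion cs ht (lt_of_le_of_ne (hm0 _) (ht.length_mul_left_ne m0))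
  have h := partition_count cs hm
    (fun t h1 => href t (inversion_of_eta cs h1).1)
    (fun t h1 => by
      have ht := (inversion_of_eta cs h1).1
      have : cs.IsReflection ((x⁻¹ * m0)⁻¹ * t * (x⁻¹ * m0)) := by
        have := ht.conj (x⁻¹ * m0)⁻¹
        rwa [inv_inv] at this
      exact href _ this)
  omega

/-- Length is additive below the longest element of a parabolic subgroup. -/
lemma length_add_of_longest_parab {u₀ : W} (hu : IsLongest cs J u₀) {x : W}
    (hx : x ∈ parabolic cs J) : ℓ x + ℓ (x⁻¹ * u₀) = ℓ u₀ := by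
  have hvmem : x⁻¹ * u₀ ∈ parabolic cs J := mul_mem (inv_mem hx) hu.1
  have hm : u₀ = x * (x⁻¹ * u₀) := by group
  have href : ∀ t : W, cs.IsReflection t → t ∈ parabolic cs J → eta cs u₀ t = 1 := by
    intro t ht htp
    apply eta_eq_one_of_inversion cs ht
    exact lt_of_le_of_ne (hu.2 (u₀ * t) (mul_mem hu.1 htp)) (ht.length_mul_left_ne u₀)
  have h := partition_count cs hm
    (fun t h1 => by
      obtain ⟨ht, htp⟩ := eta_refl_parab cs J hvmem h1
      exact href t ht htp)
    (fun t h1 => by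
      obtain ⟨ht, htp⟩ := eta_refl_parab cs J hx h1
      set v := x⁻¹ * u₀
      have hrefl : cs.IsReflection (v⁻¹ * t * v) := by
        have := ht.conj v⁻¹
        rwa [inv_inv] at this
      have hparab : v⁻¹ * t * v ∈ parabolic cs J :=
        mul_mem (mul_mem (inv_mem hvmem) htp) hvmem
      exact href _ hrefl hparab)
  omega

/-- Length additivity for minimal coset representatives. -/
lemma length_mul_of_minRep {w v : W} (hw : w ∈ minReps cs J) (hv : v ∈ parabolic cs J) :
    ℓ (w * v) = ℓ w + ℓ v := by
  have hnotinv : ∀ τ : W, τ ∈ parabolic cs J → eta cs w τ = 0 := by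
    intro τ hτp
    rcases zmod2_cases (eta cs w τ) with h0 | h1
    · exact h0
    · exfalso
      have := (inversion_of_eta cs h1).2
      have h2 := hw τ hτp
      omega
  exact partition_count cs rfl
    (fun t h1 => by
      obtain ⟨ht, htp⟩ := eta_refl_parab cs J hv h1
      have hconj : v * t * v⁻¹ ∈ parabolic cs J := mul_mem (mul_mem hv htp) (inv_mem hv)
      rw [eta_mul cs w v t, h1, hnotinv _ hconj]
      decide
    )
    (fun t h1 => by
      have hco : eta cs (w * v) (v⁻¹ * t * v) =
          eta cs v (v⁻¹ * t * v) + eta cs w (v * (v⁻¹ * t * v) * v⁻¹) := eta_mul cs w v _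
      have hre : v * (v⁻¹ * t * v) * v⁻¹ = t := by group
      rw [hre] at hco
      have hzero : eta cs v (v⁻¹ * t * v) = 0 := by
        rcases zmod2_cases (eta cs v (v⁻¹ * t * v)) with h0 | hone
        · exact h0
        · exfalso
          obtain ⟨ht', htp'⟩ := eta_refl_parab cs J hv hone
          have htpar : t ∈ parabolic cs J := by
            have : v * (v⁻¹ * t * v) * v⁻¹ ∈ parabolic cs J :=
              mul_mem (mul_mem hv htp') (inv_mem hv)
            rwa [hre] at this
          have := hnotinv t htpar
          rw [this] at h1
          exact absurd h1 (by decide)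
      rw [hco, hzero, h1, zero_add]
    )

end Counting


section Assembly
variable (cs : CoxeterSystem M W) (J : Set B)
local prefix:100 "σ" => cs.simple
local prefix:100 "π" => cs.wordProd
local prefix:100 "ℓ" => cs.length

lemma bruhatLE_of_LEc {u w : W} (h : LEc cs u w) : bruhatLE cs u w := by
  obtain ⟨ω, hred, hπ⟩ := cs.exists_reduced_word' w
  obtain ⟨τ, hsub, hτred, hτπ⟩ := LEc_exists_sublist cs h ω hred hπ.symm
  exact ⟨ω, hred, hπ.symm, τ, hsub, hτred, hτπ⟩

lemma LEc_of_bruhatLE {u w : W} (h : bruhatLE cs u w) : LEc cs u w := by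
  obtain ⟨ω, hred, hπ, τ, hsub, hτred, hτπ⟩ := h
  rw [← hπ, ← hτπ]
  exact LEc_of_sublist cs hred hsub hτred

lemma bruhatLE_one (w : W) : bruhatLE cs 1 w := by
  obtain ⟨ω, hred, hπ⟩ := cs.exists_reduced_word' w
  exact ⟨ω, hred, hπ.symm, [], List.nil_sublist ω, isReduced_nil cs, cs.wordProd_nil⟩

lemma bruhatLE_of_length_add {x y : W} (h : ℓ x + ℓ (x⁻¹ * y) = ℓ y) :
    bruhatLE cs x y := by
  obtain ⟨α, hαred, hαπ⟩ := cs.exists_reduced_word' x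
  obtain ⟨β, hβred, hβπ⟩ := cs.exists_reduced_word' (x⁻¹ * y)
  have hαlen : α.length = ℓ x := by
    have := hαred; unfold CoxeterSystem.IsReduced at this; rw [← hαπ] at this; omega
  have hβlen : β.length = ℓ (x⁻¹ * y) := by
    have := hβred; unfold CoxeterSystem.IsReduced at this; rw [← hβπ] at this; omega
  have hπ : π (α ++ β) = y := by
    rw [cs.wordProd_append, ← hαπ, ← hβπ]; group
  have hred : cs.IsReduced (α ++ β) := by
    unfold CoxeterSystem.IsReduced
    rw [hπ, List.length_append, hαlen, hβlen]
    omega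
  exact ⟨α ++ β, hred, hπ, α, List.sublist_append_left α β, hαred, hαπ.symm⟩

lemma bruhatLE_right_of_length_add {x y : W} (h : ℓ (x * y) = ℓ x + ℓ y) :
    bruhatLE cs y (x * y) := by
  obtain ⟨α, hαred, hαπ⟩ := cs.exists_reduced_word' x
  obtain ⟨β, hβred, hβπ⟩ := cs.exists_reduced_word' y
  have hαlen : α.length = ℓ x := by
    have := hαred; unfold CoxeterSystem.IsReduced at this; rw [← hαπ] at this; omega
  have hβlen : β.length = ℓ y := by
    have := hβred; unfold CoxeterSystem.IsReduced at this; rw [← hβπ] at this; omega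
  have hπ : π (α ++ β) = x * y := by
    rw [cs.wordProd_append, ← hαπ, ← hβπ]
  have hred : cs.IsReduced (α ++ β) := by
    unfold CoxeterSystem.IsReduced
    rw [hπ, List.length_append, hαlen, hβlen]
    omega
  exact ⟨α ++ β, hred, hπ, β, List.sublist_append_right α β, hβred, hβπ.symm⟩

/-- The key "quotient descent" lemma: if `x ≤ cb` with suitable length additivity,
then `xb⁻¹ ≤ c`. -/
lemma LEc_quot : ∀ n : ℕ, ∀ b x c : W, ℓ b ≤ n → ℓ (x * b⁻¹) + ℓ b = ℓ x →
    ℓ (c * b) = ℓ c + ℓ b → LEc cs x (c * b) → LEc cs (x * b⁻¹) c := by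
  intro n
  induction n with
  | zero =>
    intro b x c hb h1 h2 h3
    have hb1 : b = 1 := cs.length_eq_zero_iff.mp (Nat.le_zero.mp hb)
    subst hb1
    rw [mul_one] at h3
    rw [inv_one, mul_one]
    exact h3
  | succ n ih =>
    intro b x c hb h1 h2 h3
    by_cases hb0 : ℓ b = 0
    · have hb1 : b = 1 := cs.length_eq_zero_iff.mp hb0
      subst hb1
      rw [mul_one] at h3
      rw [inv_one, mul_one]
      exact h3
    · have hbne : b ≠ 1 := fun h => hb0 (by rw [h]; exact cs.length_one)
      obtain ⟨i, hdesc⟩ := cs.exists_rightDescent_of_ne_one hbne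
      have hdesc' : ℓ (b * σ i) < ℓ b := hdesc
      have hb' : ℓ (b * σ i) + 1 = ℓ b := by
        rcases cs.length_mul_simple b i with h | h <;> omega
      have hxb : x * b⁻¹ * (b * σ i) = x * σ i := by group
      have hx'le : ℓ (x * σ i) ≤ ℓ (x * b⁻¹) + ℓ (b * σ i) := by
        rw [← hxb]; exact cs.length_mul_le _ _
      have hx' : ℓ (x * σ i) + 1 = ℓ x := by
        rcases cs.length_mul_simple x i with h | h <;> omega
      have hcb5 : c * (b * σ i) = (c * b) * σ i := by group
      have hcb4 : ℓ (c * (b * σ i)) ≤ ℓ c + ℓ (b * σ i) := cs.length_mul_le _ _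
      have hcbs : ℓ ((c * b) * σ i) + 1 = ℓ (c * b) := by
        rcases cs.length_mul_simple (c * b) i with h | h
        · rw [← hcb5] at h; omega
        · omega
      have hcbdesc : ℓ ((c * b) * σ i) < ℓ (c * b) := by omega
      have hcb' : ℓ (c * (b * σ i)) = ℓ c + ℓ (b * σ i) := by
        rw [hcb5]; omega
      have hxdesc : ℓ (x * σ i) < ℓ x := by omega
      have hdlift : LEc cs (x * σ i) ((c * b) * σ i) := LEc_dlift cs h3 hcbdesc hxdesc
      have hre : x * σ i * (b * σ i)⁻¹ = x * b⁻¹ := by group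
      have hcond1 : ℓ (x * σ i * (b * σ i)⁻¹) + ℓ (b * σ i) = ℓ (x * σ i) := by
        rw [hre]; omega
      have hchain : LEc cs (x * σ i) (c * (b * σ i)) := by
        rw [hcb5]; exact hdlift
      have := ih (b * σ i) (x * σ i) c (by omega) hcond1 hcb' hchain
      rwa [hre] at this
  
end Assembly

end TNNFlag

namespace TNNFlag

variable {B : Type*} {W : Type*} [Group W] {M : CoxeterMatrix B}

/-- Assume W is finite, let u₀ be the longest element of W_J and w₀^J the
longest element of W^J.  Then (u₀, u₀, w₀^J) ∈ 𝓘^J and Q_{u₀,u₀,w₀^J} is the greatest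
element of 𝓠^J. -/
theorem QJ_has_top
    (cs : CoxeterSystem M W) (J : Set B) (u₀ : W)
    (hW : Finite W) (hu₀ : IsLongest cs J u₀)
    (w₀J : W) (hw₀J : w₀J ∈ minReps cs J)
    (hw₀Jmax : ∀ v ∈ minReps cs J, cs.length v ≤ cs.length w₀J) :
    (u₀, u₀, w₀J) ∈ IndexSet cs J u₀ ∧
    ∀ p : Option (W × W × W), Qmem cs J u₀ p → QLE cs J p (some (u₀, u₀, w₀J)) := by
  classical
  haveI := hW
  haveI : Nonempty W := ⟨1⟩
  obtain ⟨w₀, hw₀⟩ := Finite.exists_max (cs.length)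
  have hu₀p : u₀ ∈ parabolic cs J := hu₀.1
  have hadd : ∀ {w v : W}, w ∈ minReps cs J → v ∈ parabolic cs J →
      cs.length (w * v) = cs.length w + cs.length v :=
    fun hw hv => length_mul_of_minRep cs J hw hv
  have hparab_add : ∀ {x : W}, x ∈ parabolic cs J →
      cs.length x + cs.length (x⁻¹ * u₀) = cs.length u₀ :=
    fun hx => length_add_of_longest_parab cs J hu₀ hx
  have hmax_add : ∀ x : W, cs.length x + cs.length (x⁻¹ * w₀) = cs.length w₀ :=
    length_add_of_max cs hw₀
  have hw0u0 : cs.length (w₀ * u₀⁻¹) + cs.length u₀ = cs.length w₀ := by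
    have h := hmax_add (w₀ * u₀⁻¹)
    have hre : (w₀ * u₀⁻¹)⁻¹ * w₀ = u₀ := by group
    rwa [hre] at h
  have hmin : w₀ * u₀⁻¹ ∈ minReps cs J := by
    intro v hv
    have h1 := hmax_add (w₀ * u₀⁻¹ * v)
    have hre1 : (w₀ * u₀⁻¹ * v)⁻¹ * w₀ = v⁻¹ * u₀ := by group
    rw [hre1] at h1
    have h2 := hparab_add hv
    omega
  have hle1 : cs.length (w₀ * u₀⁻¹) ≤ cs.length w₀J := hw₀Jmax _ hmin
  have hw0Jlen : cs.length (w₀J * u₀) = cs.length w₀J + cs.length u₀ := hadd hw₀J hu₀p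
  have hle2 : cs.length (w₀J * u₀) ≤ cs.length w₀ := hw₀ _
  have hw0Jeq : cs.length (w₀J * u₀) = cs.length w₀ := by omega
  have hW0 : w₀J * u₀ = w₀ := by
    have h := hmax_add (w₀J * u₀)
    rw [hw0Jeq] at h
    have h0 : cs.length ((w₀J * u₀)⁻¹ * w₀) = 0 := by omega
    exact inv_mul_eq_one.mp (cs.length_eq_zero_iff.mp h0)
  have hone_min : (1 : W) ∈ minReps cs J := by
    intro v hv
    rw [one_mul, cs.length_one]
    exact Nat.zero_le _
  constructor
  · exact ⟨⟨1, hone_min, (one_mul u₀).symm⟩, hu₀p, hw₀J,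
      bruhatLE_right_of_length_add cs hw0Jlen⟩
  · intro p hp
    cases p with
    | none => exact trivial
    | some t =>
      obtain ⟨a, b, c⟩ := t
      have hp' : (a, b, c) ∈ IndexSet cs J u₀ := hp
      obtain ⟨hamax, hbp, hcmin, hle⟩ := hp'
      obtain ⟨v, hvmin, hav⟩ := hamax
      have hav' : a = v * u₀ := hav
      show cellLE cs J (a, b, c) (u₀, u₀, w₀J)
      refine Or.inr ⟨1, b, one_mem _, hbp, (one_mul b).symm, ?_, ?_, ?_, ?_⟩
      · simp [cs.length_one]
      · have h1 : u₀ * u₀⁻¹ = (1 : W) := by group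
        show bruhatLE cs (u₀ * u₀⁻¹) (a * b⁻¹)
        rw [h1]
        exact bruhatLE_one cs _
      · show bruhatLE cs (a * b⁻¹) (c * 1)
        rw [mul_one]
        apply bruhatLE_of_LEc
        refine LEc_quot cs (cs.length b) b a c (le_refl _) ?_ (hadd hcmin hbp)
          (LEc_of_bruhatLE cs hle)
        have hub : u₀ * b⁻¹ ∈ parabolic cs J := mul_mem hu₀p (inv_mem hbp)
        have h4 := hparab_add hub
        have hre2 : (u₀ * b⁻¹)⁻¹ * u₀ = b := by group
        rw [hre2] at h4
        have h5 : a * b⁻¹ = v * (u₀ * b⁻¹) := by rw [hav']; group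
        have h6 : cs.length (a * b⁻¹) = cs.length v + cs.length (u₀ * b⁻¹) := by
          rw [h5]; exact hadd hvmin hub
        have h7 : cs.length a = cs.length v + cs.length u₀ := by
          rw [hav']; exact hadd hvmin hu₀p
        omega
      · show bruhatLE cs (c * 1) w₀J
        rw [mul_one]
        apply bruhatLE_of_LEc
        have hcu : cs.length (c * u₀) = cs.length c + cs.length u₀ := hadd hcmin hu₀p
        have hchain : LEc cs (c * u₀) (w₀J * u₀) := by
          rw [hW0]
          exact LEc_of_bruhatLE cs (bruhatLE_of_length_add cs (hmax_add (c * u₀)))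
        have hre3 : c * u₀ * u₀⁻¹ = c := by group
        have hcond1 : cs.length (c * u₀ * u₀⁻¹) + cs.length u₀ = cs.length (c * u₀) := by
          rw [hre3]; omega
        have h := LEc_quot cs (cs.length u₀) u₀ (c * u₀) w₀J (le_refl _) hcond1 hw0Jlen hchain
        rwa [hre3] at h

end TNNFlag
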